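/- arXiv:2104.01390 — 4 statements merged into one kernel-verified Lean document; each statement's English description precedes it below -/
import Mathlib

section
/- Let x : ℝ → ℝⁿ be differentiable and satisfy ẋ(t) = a(x(t)) + G(x(t))·u(t) with m = n and G(x(t)) invertible for every t. Fix a constant desired state x_des ∈ ℝⁿ and let K be an n×n diagonal matrix with diagonal entries k_i > 0. If u(t) = G(x(t))⁻¹ · (K·(x_des − x(t)) − a(x(t))), then each component of the tracking error e(t) = x_des − x(t) satisfies e_i(t) = exp(−k_i t)·e_i(0) for all t ≥ 0; in particular x(t) → x_des as t → ∞. -/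
open Matrix Filter

/-
The control law cancels the drift `a` and the input matrix `G` exactly, so the closed loop is
the linear system `ẋ = K (x_des − x)`. Since `K` is diagonal, the error components decouple
into scalar equations `ėᵢ = −kᵢ eᵢ`, and `t ↦ exp (kᵢ t) eᵢ(t)` has zero derivative, hence is
constant.
-/

theorem Matrix.mulVec_nonsing_inv_mulVec {ι R : Type*} [Fintype ι] [DecidableEq ι] [CommRing R]
    {A : Matrix ι ι R} (hA : IsUnit A) (v : ι → R) : A *ᵥ (A⁻¹ *ᵥ v) = v := by
  rw [mulVec_mulVec, mul_nonsing_inv _ ((isUnit_iff_isUnit_det A).mp hA), one_mulVec]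

theorem eq_exp_neg_mul_smul_of_hasDerivAt {E : Type*} [NormedAddCommGroup E] [NormedSpace ℝ E]
    {f : ℝ → E} {k : ℝ} (hf : ∀ t, HasDerivAt f (-k • f t) t) (t : ℝ) :
    f t = Real.exp (-k * t) • f 0 := by
  have hg : ∀ s, HasDerivAt (fun s => Real.exp (k * s) • f s) 0 s := by
    intro s
    have hexp : HasDerivAt (fun s => Real.exp (k * s)) (Real.exp (k * s) * k) s := by
      simpa using ((hasDerivAt_id s).const_mul k).exp
    refine (hexp.smul (hf s)).congr_deriv ?_
    rw [smul_smul, ← add_smul, mul_neg, neg_add_cancel, zero_smul]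
  have hconst : Real.exp (k * t) • f t = f 0 := by
    simpa using is_const_of_deriv_eq_zero (fun s => (hg s).differentiableAt)
      (fun s => (hg s).deriv) t 0
  rw [← hconst, smul_smul, ← Real.exp_add, neg_mul, neg_add_cancel, Real.exp_zero, one_smul]

theorem tendsto_exp_neg_mul_atTop_nhds_zero {k : ℝ} (hk : 0 < k) :
    Tendsto (fun t => Real.exp (-k * t)) atTop (nhds 0) :=
  Real.tendsto_exp_atBot.comp (tendsto_id.const_mul_atTop_of_neg (neg_neg_of_pos hk))

/-- For the input-affine system `ẋ = a(x) + G(x)u` with `G(x(t))` invertible,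
constant desired state `x_des`, and diagonal gain matrix `K = diagonal κ` with `κ i > 0`,
the NDI law with linear proportional feedback
`u(t) = G(x(t))⁻¹·(K·(x_des − x(t)) − a(x(t)))` makes each component of the tracking error
decay exponentially, `e_i(t) = exp(−κ_i t)·e_i(0)` for `t ≥ 0`; in particular
`x(t) → x_des` as `t → ∞`. -/
theorem ndi_proportional_feedback_exponential_tracking
    {n : ℕ}
    (a : (Fin n → ℝ) → (Fin n → ℝ))
    (G : (Fin n → ℝ) → Matrix (Fin n) (Fin n) ℝ)
    (u : ℝ → (Fin n → ℝ))
    (x : ℝ → (Fin n → ℝ))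
    (xdes : Fin n → ℝ)
    (κ : Fin n → ℝ)
    (hκ : ∀ i, 0 < κ i)
    (hx : ∀ t : ℝ, HasDerivAt x (a (x t) + (G (x t)).mulVec (u t)) t)
    (hinv : ∀ t : ℝ, IsUnit (G (x t)))
    (hu : ∀ t : ℝ,
      u t = (G (x t))⁻¹.mulVec ((Matrix.diagonal κ).mulVec (xdes - x t) - a (x t))) :
    (∀ t : ℝ, 0 ≤ t → ∀ i : Fin n,
        xdes i - x t i = Real.exp (-(κ i) * t) * (xdes i - x 0 i)) ∧
      Tendsto x atTop (nhds xdes) := by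
  have hclosed : ∀ t, HasDerivAt x (diagonal κ *ᵥ (xdes - x t)) t := fun t => by
    simpa only [hu t, mulVec_nonsing_inv_mulVec (hinv t), add_sub_cancel] using hx t
  have herr : ∀ i t, HasDerivAt (fun s => xdes i - x s i) (-κ i • (xdes i - x t i)) t :=
    fun i t => by
      simpa [mulVec_diagonal] using ((hasDerivAt_pi.mp (hclosed t)) i).const_sub (xdes i)
  have hsol : ∀ i t, xdes i - x t i = Real.exp (-κ i * t) * (xdes i - x 0 i) :=
    fun i => eq_exp_neg_mul_smul_of_hasDerivAt (herr i)
  refine ⟨fun t _ i => hsol i t, tendsto_pi_nhds.2 fun i => ?_⟩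
  have hdecay : Tendsto (fun t => xdes i - Real.exp (-κ i * t) * (xdes i - x 0 i)) atTop
      (nhds (xdes i - 0 * (xdes i - x 0 i))) :=
    tendsto_const_nhds.sub ((tendsto_exp_neg_mul_atTop_nhds_zero (hκ i)).mul_const _)
  rw [zero_mul, sub_zero] at hdecay
  exact hdecay.congr fun t => by rw [← hsol, sub_sub_cancel]
end

section
/- Let x : ℝ → ℝⁿ be differentiable and satisfy ẋ(t) = a(x(t)) + G(x(t))·u(t), let h : ℝⁿ → ℝᵏ be differentiable, suppose m = k and Dh(x(t))·G(x(t)) is invertible for every t. Fix a constant desired output y_des ∈ ℝᵏ and a diagonal matrix K with positive diagonal entries k_i. If u(t) = (Dh(x(t))·G(x(t)))⁻¹ · (K·(y_des − h(x(t))) − Dh(x(t))·a(x(t))), then each component of the output error satisfies (y_des − h(x(t)))_i = exp(−k_i t)·(y_des − h(x(0)))_i for all t ≥ 0, so the closed-loop output dynamics is exactly linear and the output converges exponentially to y_des. -/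
/-!
The NDI law cancels the drift: by the chain rule the output moves with velocity
`J (a + G u) = K (y_des - h x)`, so each component of the tracking error solves the scalar
linear ODE `ė = -κᵢ e`, whose solutions are `e t = exp (-κᵢ t) e 0`.
-/

open Matrix

theorem eq_exp_mul_smul_of_hasDerivAt_smul {E : Type*} [NormedAddCommGroup E] [NormedSpace ℝ E]
    {c : ℝ} {f : ℝ → E} (hf : ∀ t, HasDerivAt f (c • f t) t) (t : ℝ) :
    f t = Real.exp (c * t) • f 0 := by
  have hderiv_zero : ∀ s, HasDerivAt (fun s => Real.exp (-c * s) • f s) 0 s := by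
    intro s
    have hexp : HasDerivAt (fun s => Real.exp (-c * s)) (Real.exp (-c * s) * -c) s := by
      simpa using ((hasDerivAt_id s).const_mul (-c)).exp
    refine (hexp.smul (hf s)).congr_deriv ?_
    rw [smul_smul, mul_neg, neg_smul, add_neg_cancel]
  have hconst := is_const_of_deriv_eq_zero (fun s => (hderiv_zero s).differentiableAt)
    (fun s => (hderiv_zero s).deriv) t 0
  simp only [mul_zero, Real.exp_zero, one_smul] at hconst
  rw [← hconst, smul_smul, ← Real.exp_add]
  simp

theorem mulVec_add_mulVec_nonsing_inv_mulVec_sub {R m n : Type*} [CommRing R] [Fintype m]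
    [DecidableEq m] [Fintype n] (J : Matrix m n R) (G : Matrix n m R) (hJG : IsUnit (J * G))
    (a : n → R) (v : m → R) :
    J *ᵥ (a + G *ᵥ ((J * G)⁻¹ *ᵥ (v - J *ᵥ a))) = v := by
  rw [mulVec_add, mulVec_mulVec, mulVec_mulVec,
    mul_nonsing_inv _ ((isUnit_iff_isUnit_det _).mp hJG), one_mulVec, add_sub_cancel]

theorem HasDerivAt.comp_of_fderiv_eq_mulVec {m n : Type*} [Fintype m] [Fintype n]
    {h : (n → ℝ) → (m → ℝ)} {J : (n → ℝ) → Matrix m n ℝ} {x : ℝ → (n → ℝ)} {x' : n → ℝ}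
    {t : ℝ} (hx : HasDerivAt x x' t) (hh : DifferentiableAt ℝ h (x t))
    (hJ : ∀ w, fderiv ℝ h (x t) w = J (x t) *ᵥ w) :
    HasDerivAt (fun s => h (x s)) (J (x t) *ᵥ x') t := by
  have := hh.hasFDerivAt.comp_hasDerivAt t hx
  rwa [hJ] at this

theorem ndi_output_feedback_exponential_tracking_general
    {n k : ℕ}
    (a : (Fin n → ℝ) → (Fin n → ℝ))
    (G : (Fin n → ℝ) → Matrix (Fin n) (Fin k) ℝ)
    (u : ℝ → (Fin k → ℝ))
    (x : ℝ → (Fin n → ℝ))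
    (h : (Fin n → ℝ) → (Fin k → ℝ))
    (J : (Fin n → ℝ) → Matrix (Fin k) (Fin n) ℝ)
    (ydes : Fin k → ℝ)
    (κ : Fin k → ℝ)
    (hx : ∀ t : ℝ, HasDerivAt x (a (x t) + (G (x t)).mulVec (u t)) t)
    (hh : Differentiable ℝ h)
    (hJ : ∀ v w : Fin n → ℝ, fderiv ℝ h v w = (J v).mulVec w)
    (hinv : ∀ t : ℝ, IsUnit (J (x t) * G (x t)))
    (hu : ∀ t : ℝ,
      u t = (J (x t) * G (x t))⁻¹.mulVec
        ((Matrix.diagonal κ).mulVec (ydes - h (x t)) - (J (x t)).mulVec (a (x t)))) :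
    ∀ t : ℝ, 0 ≤ t → ∀ i : Fin k,
      ydes i - h (x t) i = Real.exp (-(κ i) * t) * (ydes i - h (x 0) i) := by
  intro t _ i
  have houtput : ∀ s, HasDerivAt (fun s => h (x s)) (diagonal κ *ᵥ (ydes - h (x s))) s := by
    intro s
    have := (hx s).comp_of_fderiv_eq_mulVec (hh (x s)) (hJ (x s))
    rwa [hu s, mulVec_add_mulVec_nonsing_inv_mulVec_sub _ _ (hinv s)] at this
  have herror : ∀ s, HasDerivAt (fun s => ydes i - h (x s) i)
      (-κ i • (ydes i - h (x s) i)) s := by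
    intro s
    refine ((hasDerivAt_pi.mp (houtput s) i).const_sub (ydes i)).congr_deriv ?_
    simp [mulVec_diagonal]
  exact eq_exp_mul_smul_of_hasDerivAt_smul herror t

/-- For the input-affine system `ẋ = a(x) + G(x)u` with differentiable output
map `h` whose Fréchet derivative is the Jacobian matrix `J`, `m = k`, `J(x(t))·G(x(t))`
invertible, constant desired output `y_des`, and diagonal gain matrix `K = diagonal κ`
with `κ i > 0`, the NDI law with linear proportional feedback
`u(t) = (Dh(x(t))·G(x(t)))⁻¹·(K·(y_des − h(x(t))) − Dh(x(t))·a(x(t)))` makes each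
component of the output error decay exponentially:
`(y_des − h(x(t)))_i = exp(−κ_i t)·(y_des − h(x(0)))_i` for all `t ≥ 0`. -/
theorem ndi_output_feedback_exponential_tracking
    {n k : ℕ}
    (a : (Fin n → ℝ) → (Fin n → ℝ))
    (G : (Fin n → ℝ) → Matrix (Fin n) (Fin k) ℝ)
    (u : ℝ → (Fin k → ℝ))
    (x : ℝ → (Fin n → ℝ))
    (h : (Fin n → ℝ) → (Fin k → ℝ))
    (J : (Fin n → ℝ) → Matrix (Fin k) (Fin n) ℝ)
    (ydes : Fin k → ℝ)
    (κ : Fin k → ℝ)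
    (hκ : ∀ i, 0 < κ i)
    (hx : ∀ t : ℝ, HasDerivAt x (a (x t) + (G (x t)).mulVec (u t)) t)
    (hh : Differentiable ℝ h)
    (hJ : ∀ v w : Fin n → ℝ, fderiv ℝ h v w = (J v).mulVec w)
    (hinv : ∀ t : ℝ, IsUnit (J (x t) * G (x t)))
    (hu : ∀ t : ℝ,
      u t = (J (x t) * G (x t))⁻¹.mulVec
        ((Matrix.diagonal κ).mulVec (ydes - h (x t)) - (J (x t)).mulVec (a (x t)))) :
    ∀ t : ℝ, 0 ≤ t → ∀ i : Fin k,
      ydes i - h (x t) i = Real.exp (-(κ i) * t) * (ydes i - h (x 0) i) :=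
  ndi_output_feedback_exponential_tracking_general a G u x h J ydes κ hx hh hJ hinv hu
end

section
/- Let x : ℝ → ℝⁿ be differentiable and satisfy ẋ(t) = a(x(t)) + G(x(t))·u(t), with m = n and G(x(t)) invertible for every t. Fix a constant x_des ∈ ℝⁿ, define the switching function σ(t) = x_des − x(t), and let K_n, K_s be n×n diagonal matrices with positive diagonal entries. If the control is the robust NDI/sliding-mode law u(t) = G(x(t))⁻¹·(K_n·σ(t) − a(x(t)) + K_s·sgn(σ(t))), where sgn acts entrywise with sgn(0) = 0, then for every t with σ(t) ≠ 0 one has ⟨σ(t), σ̇(t)⟩ = −σ(t)ᵀ·K_n·σ(t) − Σᵢ (K_s)ᵢᵢ·|σᵢ(t)| < 0, i.e., the sliding condition σᵀσ̇ < 0 holds off the sliding surface. -/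
/-!
The law is a nonlinear dynamic inversion: since `G(x)` is invertible, `a(x) + G(x) u` collapses
to `K_n σ + K_s sgn σ`, so `σ̇ = -(K_n σ + K_s sgn σ)`. Hence
`⟨σ, σ̇⟩ = -σᵀ K_n σ - Σᵢ (K_s)ᵢᵢ |σᵢ|`, using `r · sgn r = |r|`; the first term is negative for
`σ ≠ 0` because `K_n` is positive definite, and the second is nonpositive.
-/

open Matrix

lemma Real.mul_sign_eq_abs (r : ℝ) : r * Real.sign r = |r| := by
  rcases lt_trichotomy r 0 with h | rfl | h
  · rw [Real.sign_of_neg h, abs_of_neg h, mul_neg_one]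
  · simp
  · rw [Real.sign_of_pos h, abs_of_pos h, mul_one]

namespace Matrix

lemma mulVec_nonsing_inv_mulVec_s10 {ι R : Type*} [Fintype ι] [DecidableEq ι] [CommRing R]
    {A : Matrix ι ι R} (hA : IsUnit A) (w : ι → R) : A *ᵥ (A⁻¹ *ᵥ w) = w := by
  rw [mulVec_mulVec, mul_nonsing_inv _ ((isUnit_iff_isUnit_det A).mp hA), one_mulVec]

lemma dotProduct_diagonal_mulVec_sign {ι : Type*} [Fintype ι] [DecidableEq ι] (k v : ι → ℝ) :
    v ⬝ᵥ diagonal k *ᵥ (fun i => Real.sign (v i)) = ∑ i, k i * |v i| := by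
  simp only [dotProduct, mulVec_diagonal]
  refine Finset.sum_congr rfl fun i _ => ?_
  rw [← Real.mul_sign_eq_abs]
  ring

end Matrix

/-- For the input-affine system `ẋ = a(x) + G(x)u` with `G(x(t))`
invertible, constant desired state `x_des`, switching function `σ(t) = x_des − x(t)`, and
diagonal positive gain matrices `K_n = diagonal κₙ`, `K_s = diagonal κₛ`, the robust
NDI/sliding-mode law `u(t) = G(x(t))⁻¹·(K_n·σ(t) − a(x(t)) + K_s·sgn(σ(t)))` (entrywise
sign, `sgn 0 = 0`) makes the sliding condition hold off the sliding surface: whenever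
`σ(t) ≠ 0`, `⟨σ(t), σ̇(t)⟩ = −σ(t)ᵀ·K_n·σ(t) − Σᵢ (K_s)ᵢᵢ·|σᵢ(t)| < 0`. -/
theorem sliding_mode_ndi_sliding_condition
    {n : ℕ}
    (a : (Fin n → ℝ) → (Fin n → ℝ))
    (G : (Fin n → ℝ) → Matrix (Fin n) (Fin n) ℝ)
    (u : ℝ → (Fin n → ℝ))
    (x : ℝ → (Fin n → ℝ))
    (xdes : Fin n → ℝ)
    (κₙ κₛ : Fin n → ℝ)
    (hκₙ : ∀ i, 0 < κₙ i)
    (hκₛ : ∀ i, 0 < κₛ i)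
    (hx : ∀ t : ℝ, HasDerivAt x (a (x t) + (G (x t)).mulVec (u t)) t)
    (hinv : ∀ t : ℝ, IsUnit (G (x t)))
    (hu : ∀ t : ℝ,
      u t = (G (x t))⁻¹.mulVec
        ((Matrix.diagonal κₙ).mulVec (xdes - x t) - a (x t)
          + (Matrix.diagonal κₛ).mulVec fun i => Real.sign (xdes i - x t i))) :
    ∀ t : ℝ, xdes - x t ≠ 0 →
      (xdes - x t) ⬝ᵥ deriv (fun s => xdes - x s) t
          = -((xdes - x t) ⬝ᵥ (Matrix.diagonal κₙ).mulVec (xdes - x t))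
            - ∑ i, κₛ i * |xdes i - x t i| ∧
        (xdes - x t) ⬝ᵥ deriv (fun s => xdes - x s) t < 0 := by
  intro t hσ
  set σ := xdes - x t
  have hclosed_loop : a (x t) + G (x t) *ᵥ u t
      = diagonal κₙ *ᵥ σ + diagonal κₛ *ᵥ fun i => Real.sign (σ i) := by
    rw [hu t, mulVec_nonsing_inv_mulVec_s10 (hinv t)]
    abel
  have hσ_deriv : deriv (fun s => xdes - x s) t
      = -(diagonal κₙ *ᵥ σ + diagonal κₛ *ᵥ fun i => Real.sign (σ i)) := by
    rw [← hclosed_loop]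
    exact ((hx t).const_sub xdes).deriv
  have hσ_dot : σ ⬝ᵥ deriv (fun s => xdes - x s) t
      = -(σ ⬝ᵥ diagonal κₙ *ᵥ σ) - ∑ i, κₛ i * |σ i| := by
    rw [hσ_deriv, dotProduct_neg, dotProduct_add, dotProduct_diagonal_mulVec_sign]
    ring
  refine ⟨hσ_dot, hσ_dot ▸ ?_⟩
  have hquadratic : 0 < σ ⬝ᵥ diagonal κₙ *ᵥ σ := by
    simpa only [star_trivial] using (PosDef.diagonal hκₙ).dotProduct_mulVec_pos hσ
  have hswitching : 0 ≤ ∑ i, κₛ i * |σ i| :=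
    Finset.sum_nonneg fun i _ => mul_nonneg (hκₛ i).le (abs_nonneg _)
  linarith
end

section
/- Let σ : [0, ∞) → ℝⁿ (Euclidean) be differentiable and let η > 0. Suppose the reaching condition ⟨σ(t), σ̇(t)⟩ ≤ −η·‖σ(t)‖ holds whenever σ(t) ≠ 0. Then the trajectory reaches the sliding surface in finite time: there exists t* with 0 ≤ t* ≤ ‖σ(0)‖/η and σ(t*) = 0. -/
/-! While `σ` stays off the surface, the reaching condition says that `‖σ‖` decreases at rate at
least `η`, i.e. `t ↦ ‖σ t‖ + η t` is antitone. If `σ` never vanished on `[0, ‖σ 0‖ / η]`, then at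
the right endpoint `‖σ‖ ≤ ‖σ 0‖ - η · ‖σ 0‖ / η = 0`, a contradiction. -/

open Set
open scoped RealInnerProductSpace

variable {E : Type*} [NormedAddCommGroup E] [InnerProductSpace ℝ E]

theorem HasDerivAt.norm {f : ℝ → E} {f' : E} {t : ℝ} (hf : HasDerivAt f f' t) (h0 : f t ≠ 0) :
    HasDerivAt (‖f ·‖) (⟪f t, f'⟫ / ‖f t‖) t := by
  have hsq : ‖f t‖ ^ 2 ≠ 0 := pow_ne_zero 2 (norm_ne_zero_iff.2 h0)
  have hsqrt := hf.norm_sq.sqrt hsq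
  simp only [Real.sqrt_sq (norm_nonneg _)] at hsqrt
  convert hsqrt using 1
  field_simp

theorem antitoneOn_norm_add_mul_of_inner_deriv_le {f : ℝ → E} {η : ℝ} {s : Set ℝ}
    (hs : Convex ℝ s) (hf : ∀ t ∈ s, DifferentiableAt ℝ f t) (hne : ∀ t ∈ s, f t ≠ 0)
    (hreach : ∀ t ∈ s, ⟪f t, deriv f t⟫ ≤ -η * ‖f t‖) :
    AntitoneOn (fun t ↦ ‖f t‖ + η * t) s := by
  have hderiv : ∀ t ∈ s,
      HasDerivAt (fun t ↦ ‖f t‖ + η * t) (⟪f t, deriv f t⟫ / ‖f t‖ + η) t := fun t ht ↦ by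
    have h := ((hf t ht).hasDerivAt.norm (hne t ht)).add ((hasDerivAt_id' t).const_mul η)
    rwa [mul_one] at h
  refine antitoneOn_of_deriv_nonpos hs
    (fun t ht ↦ (hderiv t ht).continuousAt.continuousWithinAt)
    (fun t ht ↦ (hderiv t (interior_subset ht)).differentiableAt.differentiableWithinAt)
    (fun t ht ↦ ?_)
  replace ht := interior_subset ht
  rw [(hderiv t ht).deriv]
  have hpos : 0 < ‖f t‖ := norm_pos_iff.2 (hne t ht)
  have hrate : ⟪f t, deriv f t⟫ / ‖f t‖ ≤ -η := by
    rw [div_le_iff₀ hpos]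
    exact hreach t ht
  linarith

/-- If `σ : [0, ∞) → ℝⁿ` (Euclidean) is differentiable and satisfies the
η-reaching condition `⟨σ(t), σ̇(t)⟩ ≤ −η‖σ(t)‖` whenever `σ(t) ≠ 0` (for `t ≥ 0`), then
the sliding surface is reached in finite time: there is `t*` with
`0 ≤ t* ≤ ‖σ(0)‖/η` and `σ(t*) = 0`. -/
theorem sliding_surface_finite_time_reaching
    {n : ℕ}
    (σ : ℝ → EuclideanSpace ℝ (Fin n))
    (η : ℝ)
    (hη : 0 < η)
    (hdiff : Differentiable ℝ σ)
    (hreach : ∀ t : ℝ, 0 ≤ t → σ t ≠ 0 →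
      (inner ℝ (σ t) (deriv σ t) : ℝ) ≤ -η * ‖σ t‖) :
    ∃ tstar : ℝ, 0 ≤ tstar ∧ tstar ≤ ‖σ 0‖ / η ∧ σ tstar = 0 := by
  set T := ‖σ 0‖ / η
  have hT : 0 ≤ T := by positivity
  by_contra! hne
  have hanti := antitoneOn_norm_add_mul_of_inner_deriv_le (convex_Icc 0 T)
    (fun t _ ↦ hdiff t) (fun t ht ↦ hne t ht.1 ht.2)
    (fun t ht ↦ hreach t ht.1 (hne t ht.1 ht.2))
  have hdecay := hanti (left_mem_Icc.2 hT) (right_mem_Icc.2 hT) hT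
  have hηT : η * T = ‖σ 0‖ := mul_div_cancel₀ _ hη.ne'
  simp only [mul_zero, add_zero, hηT] at hdecay
  exact hne T hT le_rfl (norm_le_zero_iff.1 (by linarith))
end
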